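/- Consider the mass-action system on m = 3 species with n = 4 complexes z_1 = (1,0,0), z_2 = (0,1,0), z_3 = (1,1,0), z_4 = (1,0,1) and reactions C_1 ⇌ C_2, C_2 ⇌ C_3, C_3 ⇌ C_4 with arbitrary strictly positive rate constants k(1,2), k(2,1), k(2,3), k(3,2), k(3,4), k(4,3) (all other k(i,j) = 0). If x* ∈ ℝ_{>0}^3 is a complex balanced equilibrium of this system, then every solution x : [0, ∞) → ℝ_{>0}^3 of x' = f(x) with x(0) ∈ ℝ_{>0}^3 converges to x* as t → ∞. -/

import Mathlib

open Filter Topology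

noncomputable section

/-- The monomial `x^z = ∏ l, x l ^ z l`. -/
def mono {m : ℕ} (zv : Fin m → ℕ) (x : Fin m → ℝ) : ℝ := ∏ l, x l ^ zv l

/-- The ratio monomial `(x/x*)^z = ∏ l, (x l / x* l) ^ z l`. -/
def ratio {m : ℕ} (xstar x : Fin m → ℝ) (zv : Fin m → ℕ) : ℝ :=
  ∏ l, (x l / xstar l) ^ zv l

/-- The mass-action vector field `f(x) = Σ_{i,j} k(i,j) (z_j - z_i) x^{z_i}`
(terms with `k i j = 0` vanish, so this is the sum over reactions). -/
def maf {m n : ℕ} (z : Fin n → Fin m → ℕ) (k : Fin n → Fin n → ℝ) (x : Fin m → ℝ) :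
    Fin m → ℝ :=
  fun l => ∑ i, ∑ j, k i j * ((z j l : ℝ) - (z i l : ℝ)) * mono (z i) x

/-- `x*` is a complex balanced equilibrium. -/
def complexBalanced {m n : ℕ} (z : Fin n → Fin m → ℕ) (k : Fin n → Fin n → ℝ)
    (xstar : Fin m → ℝ) : Prop :=
  ∀ i, ∑ j, k j i * mono (z j) xstar = mono (z i) xstar * ∑ j, k i j

/-- Cyclic successor on `Fin n`. -/
def cyc {n : ℕ} (i : Fin n) : Fin n := ⟨(i.val + 1) % n, Nat.mod_lt _ i.pos⟩

/-- The system is cyclic: its reactions are exactly `C_i → C_{i+1}` (cyclically). -/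
def isCyclic {n : ℕ} (k : Fin n → Fin n → ℝ) : Prop :=
  (∀ i, 0 < k i (cyc i)) ∧ ∀ i j, j ≠ cyc i → k i j = 0

/-- Inclusion `Fin (n-1) → Fin n`. -/
def emb {n : ℕ} (i : Fin (n - 1)) : Fin n := ⟨i.val, by have := i.isLt; omega⟩

/-- Successor inclusion `Fin (n-1) → Fin n`, `i ↦ i+1`. -/
def embS {n : ℕ} (i : Fin (n - 1)) : Fin n := ⟨i.val + 1, by have := i.isLt; omega⟩

/-- The stratum associated with a permutation `μ` of the complexes. -/
def stratum {m n : ℕ} (z : Fin n → Fin m → ℕ) (xstar : Fin m → ℝ)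
    (μ : Equiv.Perm (Fin n)) : Set (Fin m → ℝ) :=
  {x | (∀ l, 0 < x l) ∧
    ∀ i : Fin (n - 1), ratio xstar x (z (μ (emb i))) > ratio xstar x (z (μ (embS i)))}

/-- `L_I`: the relative interior of the face of the nonnegative orthant given by `I`. -/
def LI {m : ℕ} (I : Finset (Fin m)) : Set (Fin m → ℝ) :=
  {x | (∀ i ∈ I, x i = 0) ∧ ∀ i ∉ I, 0 < x i}

/-- Semi-locking set. -/
def semiLocking {m n : ℕ} (z : Fin n → Fin m → ℕ) (k : Fin n → Fin n → ℝ)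
    (I : Finset (Fin m)) : Prop :=
  I.Nonempty ∧ ∀ i j : Fin n, 0 < k i j → (∃ l ∈ I, 0 < z j l) → ∃ l ∈ I, 0 < z i l

/-- The stoichiometric subspace. -/
def stoich {m n : ℕ} (z : Fin n → Fin m → ℕ) (k : Fin n → Fin n → ℝ) :
    Submodule ℝ (Fin m → ℝ) :=
  Submodule.span ℝ {v | ∃ i j : Fin n, 0 < k i j ∧ v = fun l => (z j l : ℝ) - (z i l : ℝ)}

/-- The complexes of Example 1: `C_1 = A_1`, `C_2 = A_2`, `C_3 = A_1 + A_2`,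
`C_4 = A_1 + A_3`. -/
def zEx : Fin 4 → Fin 3 → ℕ := ![![1, 0, 0], ![0, 1, 0], ![1, 1, 0], ![1, 0, 1]]

/-!
The network is a path, so complex balance at `x*` is detailed balance. Hence the free energy
`V x = ∑ l, x* l * klFun (x l / x* l)` decreases along solutions at rate `D x / 2`, where
`D x = ∑ i j, k i j (x*)^{z i} (u i - u j) (log u i - log u j) ≥ 0` with `u i = (x / x*)^{z i}`;
for this network `D` vanishes only at `x*`. Monotonicity of `V` bounds the solution from above,
and barrier arguments, applied in turn to `x 0 + x 1`, `x 1`, then `x 0` and `x 2`, keep it away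
from the boundary. On the resulting compact box `V` is a strict Lyapunov function, which forces
convergence to `x*`.
-/

open Real Set InformationTheory

lemma antitoneOn_Ici_of_hasDerivAt_nonpos {g g' : ℝ → ℝ}
    (hg : ∀ t ≥ (0 : ℝ), HasDerivAt g (g' t) t) (hg' : ∀ t ≥ (0 : ℝ), g' t ≤ 0) :
    AntitoneOn g (Ici 0) :=
  antitoneOn_of_hasDerivWithinAt_nonpos (convex_Ici 0)
    (fun t ht => (hg t ht).continuousAt.continuousWithinAt)
    (fun t ht => (hg t (interior_subset ht)).hasDerivWithinAt)
    (fun t ht => hg' t (interior_subset ht))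

lemma le_of_hasDerivAt_nonneg_below {h h' : ℝ → ℝ} {c : ℝ}
    (hh : ∀ t ≥ (0 : ℝ), HasDerivAt h (h' t) t) (h0 : c ≤ h 0)
    (hh' : ∀ t ≥ (0 : ℝ), h t < c → 0 ≤ h' t) : ∀ t ≥ (0 : ℝ), c ≤ h t := by
  intro t₁ ht₁
  by_contra! hlt
  have hcont : ContinuousOn h (Icc 0 t₁) :=
    fun t ht => (hh t ht.1).continuousAt.continuousWithinAt
  have hS : IsCompact (Icc 0 t₁ ∩ h ⁻¹' Ici c) :=
    isCompact_Icc.of_isClosed_subset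
      (hcont.preimage_isClosed_of_isClosed isClosed_Icc isClosed_Ici) inter_subset_left
  -- the last time `t₀ ≤ t₁` at which `h` is still above `c`
  obtain ⟨t₀, ⟨⟨ht₀, ht₀₁⟩, hct₀⟩, hlast⟩ := hS.exists_isGreatest ⟨0, ⟨le_rfl, ht₁⟩, h0⟩
  have hbelow : ∀ t ∈ Ioc t₀ t₁, h t < c := fun t ht => by
    by_contra! hle
    exact (hlast ⟨⟨ht₀.trans ht.1.le, ht.2⟩, hle⟩).not_gt ht.1
  have hmono : MonotoneOn h (Icc t₀ t₁) := by
    refine monotoneOn_of_hasDerivWithinAt_nonneg (f' := h') (convex_Icc t₀ t₁)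
      (hcont.mono (Icc_subset_Icc ht₀ le_rfl)) (fun t ht => ?_) (fun t ht => ?_) <;>
      rw [interior_Icc] at ht
    · exact (hh t (ht₀.trans ht.1.le)).hasDerivWithinAt
    · exact hh' t (ht₀.trans ht.1.le) (hbelow t ⟨ht.1, ht.2.le⟩)
  exact hlt.not_ge ((hct₀ : c ≤ h t₀).trans (hmono ⟨le_rfl, ht₀₁⟩ ⟨ht₀₁, le_rfl⟩ ht₀₁))

lemma exists_pos_le_of_hasDerivAt_nonneg_below {h h' : ℝ → ℝ} {L : ℝ} (hL : 0 < L)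
    (h0 : 0 < h 0) (hh : ∀ t ≥ (0 : ℝ), HasDerivAt h (h' t) t)
    (hh' : ∀ t ≥ (0 : ℝ), h t < L → 0 ≤ h' t) : ∃ δ > 0, ∀ t ≥ (0 : ℝ), δ ≤ h t :=
  ⟨min (h 0) L, lt_min h0 hL, le_of_hasDerivAt_nonneg_below hh (min_le_left _ _)
    fun t ht hlt => hh' t ht (hlt.trans_le (min_le_right _ _))⟩

section Lyapunov

variable {E : Type*} [TopologicalSpace E] {K : Set E} {V D : E → ℝ} {p : E} {x : ℝ → E}

lemma exists_lt_of_hasDerivAt_lyapunov (hK : IsCompact K) (hV : Continuous V)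
    (hD : ContinuousOn D K) (hDpos : ∀ y ∈ K, y ≠ p → 0 < D y)
    (hxK : ∀ t ≥ (0 : ℝ), x t ∈ K)
    (hVx : ∀ t ≥ (0 : ℝ), HasDerivAt (fun s => V (x s)) (-D (x t)) t)
    {η : ℝ} (hη : V p < η) : ∃ T ≥ (0 : ℝ), V (x T) < η := by
  by_contra! hge
  set K' := K ∩ {y | η ≤ V y}
  have hK' : IsCompact K' := hK.inter_right (isClosed_le continuous_const hV)
  have hxK' : ∀ t ≥ (0 : ℝ), x t ∈ K' := fun t ht => ⟨hxK t ht, hge t ht⟩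
  obtain ⟨y₀, hy₀, hmin⟩ := hK'.exists_isMinOn ⟨x 0, hxK' 0 le_rfl⟩ (hD.mono inter_subset_left)
  have hm : 0 < D y₀ := hDpos y₀ hy₀.1 (by rintro rfl; exact hη.not_ge hy₀.2)
  -- `V (x t)` decreases at rate at least `D y₀` as long as it stays above `η`
  have hanti : AntitoneOn (fun s => V (x s) + D y₀ * s) (Ici 0) :=
    antitoneOn_Ici_of_hasDerivAt_nonpos
      (fun t ht => ((hVx t ht).add ((hasDerivAt_id t).const_mul (D y₀))).congr_deriv rfl)
      (fun t ht => by simpa using hmin (hxK' t ht))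
  set T := (V (x 0) - η + 1) / D y₀
  have hT : 0 ≤ T := div_nonneg (by linarith [hge 0 le_rfl]) hm.le
  have hdec := hanti (mem_Ici.2 le_rfl) (mem_Ici.2 hT) hT
  have hmT : D y₀ * T = V (x 0) - η + 1 := mul_div_cancel₀ _ hm.ne'
  simp only [mul_zero, add_zero] at hdec
  linarith [hge T hT]

lemma tendsto_of_hasDerivAt_lyapunov (hK : IsCompact K) (hV : Continuous V)
    (hVp : ∀ y ∈ K, y ≠ p → V p < V y) (hD : ContinuousOn D K)
    (hDnonneg : ∀ y ∈ K, 0 ≤ D y) (hDpos : ∀ y ∈ K, y ≠ p → 0 < D y)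
    (hxK : ∀ t ≥ (0 : ℝ), x t ∈ K)
    (hVx : ∀ t ≥ (0 : ℝ), HasDerivAt (fun s => V (x s)) (-D (x t)) t) :
    Tendsto x atTop (𝓝 p) := by
  have hanti : AntitoneOn (fun s => V (x s)) (Ici 0) :=
    antitoneOn_Ici_of_hasDerivAt_nonpos hVx fun t ht => neg_nonpos.2 (hDnonneg _ (hxK t ht))
  rw [(nhds_basis_opens p).tendsto_right_iff]
  rintro U ⟨hpU, hU⟩
  rw [eventually_atTop]
  rcases (K \ U).eq_empty_or_nonempty with hempty | hne
  · exact ⟨0, fun t ht => sdiff_eq_empty.1 hempty (hxK t ht)⟩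
  obtain ⟨y₁, hy₁, hmin⟩ := (hK.diff hU).exists_isMinOn hne hV.continuousOn
  obtain ⟨T, hT, hVT⟩ := exists_lt_of_hasDerivAt_lyapunov hK hV hD hDpos hxK hVx
    (hVp y₁ hy₁.1 (by rintro rfl; exact hy₁.2 hpU))
  refine ⟨T, fun t ht => ?_⟩
  by_contra hxU
  have h₁ : V y₁ ≤ V (x t) := hmin ⟨hxK t (hT.trans ht), hxU⟩
  have h₂ : V (x t) ≤ V (x T) := hanti (mem_Ici.2 hT) (mem_Ici.2 (hT.trans ht)) ht
  linarith

end Lyapunov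

lemma le_klFun_add {u : ℝ} (hu : 0 < u) : u ≤ klFun u + (exp 1 - 1) := by
  have hlog := one_sub_inv_le_log_of_pos (div_pos hu (exp_pos 1))
  rw [log_div hu.ne' (exp_pos 1).ne', log_exp, inv_div] at hlog
  have hmul : u * (1 - exp 1 / u) = u - exp 1 := by field_simp
  rw [klFun_apply]
  nlinarith [mul_le_mul_of_nonneg_left hlog hu.le]

lemma sub_mul_log_sub_log_nonneg {a b : ℝ} (ha : 0 < a) (hb : 0 < b) :
    0 ≤ (a - b) * (log a - log b) := by
  rcases le_total a b with hab | hab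
  · exact mul_nonneg_of_nonpos_of_nonpos (sub_nonpos.2 hab) (sub_nonpos.2 (log_le_log ha hab))
  · exact mul_nonneg (sub_nonneg.2 hab) (sub_nonneg.2 (log_le_log hb hab))

lemma sub_mul_log_sub_log_pos {a b : ℝ} (ha : 0 < a) (hb : 0 < b) (hab : a ≠ b) :
    0 < (a - b) * (log a - log b) := by
  rcases hab.lt_or_gt with hab | hab
  · exact mul_pos_of_neg_of_neg (sub_neg.2 hab) (sub_neg.2 (log_lt_log ha hab))
  · exact mul_pos (sub_pos.2 hab) (sub_pos.2 (log_lt_log hb hab))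

section FreeEnergy

variable {m : ℕ} {xs y : Fin m → ℝ}

def freeEnergy (xs y : Fin m → ℝ) : ℝ := ∑ l, xs l * klFun (y l / xs l)

lemma continuous_freeEnergy (xs : Fin m → ℝ) : Continuous (freeEnergy xs) :=
  continuous_finsetSum _ fun l _ =>
    continuous_const.mul (continuous_klFun.comp ((continuous_apply l).div_const _))

lemma freeEnergy_self (hxs : ∀ l, 0 < xs l) : freeEnergy xs xs = 0 := by
  simp [freeEnergy, div_self (hxs _).ne', klFun_one]

lemma mul_klFun_le_freeEnergy (hxs : ∀ l, 0 < xs l) (hy : ∀ l, 0 < y l) (l : Fin m) :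
    xs l * klFun (y l / xs l) ≤ freeEnergy xs y :=
  Finset.single_le_sum (f := fun l => xs l * klFun (y l / xs l))
    (fun l _ => mul_nonneg (hxs l).le (klFun_nonneg (div_pos (hy l) (hxs l)).le))
    (Finset.mem_univ l)

lemma freeEnergy_pos (hxs : ∀ l, 0 < xs l) (hy : ∀ l, 0 < y l) (hne : y ≠ xs) :
    0 < freeEnergy xs y := by
  obtain ⟨l, hl⟩ := Function.ne_iff.1 hne
  have hu : 0 ≤ y l / xs l := (div_pos (hy l) (hxs l)).le
  have hkl : 0 < klFun (y l / xs l) := (klFun_nonneg hu).lt_of_ne' fun h =>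
    hl ((div_eq_one_iff_eq (hxs l).ne').1 ((klFun_eq_zero_iff hu).1 h))
  exact (mul_pos (hxs l) hkl).trans_le (mul_klFun_le_freeEnergy hxs hy l)

lemma le_freeEnergy_add (hxs : ∀ l, 0 < xs l) (hy : ∀ l, 0 < y l) (l : Fin m) :
    y l ≤ freeEnergy xs y + (exp 1 - 1) * xs l := by
  have h := mul_le_mul_of_nonneg_left (le_klFun_add (div_pos (hy l) (hxs l))) (hxs l).le
  rw [mul_div_cancel₀ _ (hxs l).ne', mul_add] at h
  linarith [mul_klFun_le_freeEnergy hxs hy l]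

lemma hasDerivAt_freeEnergy {x : ℝ → Fin m → ℝ} {x' : Fin m → ℝ} {t : ℝ}
    (hxs : ∀ l, 0 < xs l) (hx : ∀ l, 0 < x t l) (hderiv : HasDerivAt x x' t) :
    HasDerivAt (fun s => freeEnergy xs (x s)) (∑ l, x' l * log (x t l / xs l)) t := by
  refine HasDerivAt.fun_sum fun l _ => ?_
  have := (((hasDerivAt_klFun (div_pos (hx l) (hxs l)).ne').comp t
    ((hasDerivAt_pi.1 hderiv l).div_const (xs l))).const_mul (xs l))
  exact this.congr_deriv (by field_simp [(hxs l).ne'])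

end FreeEnergy

section Dissipation

variable {m n : ℕ} {z : Fin n → Fin m → ℕ} {k : Fin n → Fin n → ℝ} {xs y : Fin m → ℝ}

def IsDetailedBalanced (z : Fin n → Fin m → ℕ) (k : Fin n → Fin n → ℝ) (xs : Fin m → ℝ) :
    Prop :=
  ∀ i j, k i j * mono (z i) xs = k j i * mono (z j) xs

def dissipation (z : Fin n → Fin m → ℕ) (k : Fin n → Fin n → ℝ) (xs y : Fin m → ℝ) : ℝ :=
  ∑ i, ∑ j, k i j * mono (z i) xs *
    ((ratio xs y (z i) - ratio xs y (z j)) * (log (ratio xs y (z i)) - log (ratio xs y (z j))))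

lemma mono_pos (hxs : ∀ l, 0 < xs l) (zv : Fin m → ℕ) : 0 < mono zv xs :=
  Finset.prod_pos fun l _ => pow_pos (hxs l) _

lemma ratio_pos (hxs : ∀ l, 0 < xs l) (hy : ∀ l, 0 < y l) (zv : Fin m → ℕ) :
    0 < ratio xs y zv :=
  Finset.prod_pos fun l _ => pow_pos (div_pos (hy l) (hxs l)) _

lemma log_ratio (hxs : ∀ l, 0 < xs l) (hy : ∀ l, 0 < y l) (zv : Fin m → ℕ) :
    log (ratio xs y zv) = ∑ l, zv l * log (y l / xs l) := by
  rw [ratio, log_prod fun l _ => (pow_pos (div_pos (hy l) (hxs l)) _).ne']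
  simp only [log_pow]

lemma mono_eq_mono_mul_ratio (hxs : ∀ l, xs l ≠ 0) (zv : Fin m → ℕ) :
    mono zv y = mono zv xs * ratio xs y zv := by
  rw [mono, mono, ratio, ← Finset.prod_mul_distrib]
  exact Finset.prod_congr rfl fun l _ => by rw [← mul_pow, mul_div_cancel₀ _ (hxs l)]

lemma sum_maf_mul_log (hxs : ∀ l, 0 < xs l) (hy : ∀ l, 0 < y l) :
    ∑ l, maf z k y l * log (y l / xs l) =
      ∑ i, ∑ j, k i j * mono (z i) y * (log (ratio xs y (z j)) - log (ratio xs y (z i))) := by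
  simp only [maf, log_ratio hxs hy, Finset.sum_mul, ← Finset.sum_sub_distrib, Finset.mul_sum]
  rw [Finset.sum_comm]
  refine Finset.sum_congr rfl fun i _ => ?_
  rw [Finset.sum_comm]
  exact Finset.sum_congr rfl fun j _ => Finset.sum_congr rfl fun l _ => by ring

lemma two_mul_sum_maf_mul_log (hdb : IsDetailedBalanced z k xs) (hxs : ∀ l, 0 < xs l)
    (hy : ∀ l, 0 < y l) :
    2 * ∑ l, maf z k y l * log (y l / xs l) = -dissipation z k xs y := by
  rw [sum_maf_mul_log hxs hy]
  simp only [mono_eq_mono_mul_ratio (y := y) (fun l => (hxs l).ne')]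
  set r := fun i => ratio xs y (z i)
  -- relabel `i ↔ j` and use detailed balance; averaging the two forms gives `dissipation`
  have hswap : ∑ i, ∑ j, k i j * (mono (z i) xs * r i) * (log (r j) - log (r i)) =
      ∑ i, ∑ j, k i j * mono (z i) xs * (r j * (log (r i) - log (r j))) := by
    rw [Finset.sum_comm]
    exact Finset.sum_congr rfl fun i _ => Finset.sum_congr rfl fun j _ => by
      linear_combination (r j * (log (r i) - log (r j))) * hdb j i
  rw [two_mul]
  nth_rewrite 2 [hswap]
  simp only [dissipation, ← Finset.sum_add_distrib, ← Finset.sum_neg_distrib]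
  exact Finset.sum_congr rfl fun i _ => Finset.sum_congr rfl fun j _ => by ring

lemma dissipation_nonneg (hk : ∀ i j, 0 ≤ k i j) (hxs : ∀ l, 0 < xs l) (hy : ∀ l, 0 < y l) :
    0 ≤ dissipation z k xs y :=
  Finset.sum_nonneg fun i _ => Finset.sum_nonneg fun j _ =>
    mul_nonneg (mul_nonneg (hk i j) (mono_pos hxs _).le)
      (sub_mul_log_sub_log_nonneg (ratio_pos hxs hy _) (ratio_pos hxs hy _))

lemma dissipation_pos (hk : ∀ i j, 0 ≤ k i j) (hxs : ∀ l, 0 < xs l) (hy : ∀ l, 0 < y l)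
    {i j : Fin n} (hkij : 0 < k i j) (hne : ratio xs y (z i) ≠ ratio xs y (z j)) :
    0 < dissipation z k xs y := by
  have hterm := fun i j => mul_nonneg (mul_nonneg (hk i j) (mono_pos hxs (z i)).le)
    (sub_mul_log_sub_log_nonneg (ratio_pos hxs hy (z i)) (ratio_pos hxs hy (z j)))
  refine Finset.sum_pos' (fun i _ => Finset.sum_nonneg fun j _ => hterm i j)
    ⟨i, Finset.mem_univ _, Finset.sum_pos' (fun j _ => hterm i j) ⟨j, Finset.mem_univ _, ?_⟩⟩
  exact mul_pos (mul_pos hkij (mono_pos hxs _))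
    (sub_mul_log_sub_log_pos (ratio_pos hxs hy _) (ratio_pos hxs hy _) hne)

lemma continuousOn_dissipation (hxs : ∀ l, 0 < xs l) :
    ContinuousOn (dissipation z k xs) {y | ∀ l, 0 < y l} := by
  have hr : ∀ zv, Continuous fun y => ratio xs y zv := fun zv => by unfold ratio; fun_prop
  have hlog : ∀ zv, ContinuousOn (fun y => log (ratio xs y zv)) {y | ∀ l, 0 < y l} :=
    fun zv => (hr zv).continuousOn.log fun y hy => (ratio_pos hxs hy zv).ne'
  unfold dissipation
  fun_prop

end Dissipation

lemma isDetailedBalanced_of_complexBalanced_path {m : ℕ} {z : Fin 4 → Fin m → ℕ}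
    {k : Fin 4 → Fin 4 → ℝ} {xs : Fin m → ℝ}
    (hk : ∀ i j : Fin 4, ¬(i.val + 1 = j.val ∨ j.val + 1 = i.val) → k i j = 0)
    (hcb : complexBalanced z k xs) : IsDetailedBalanced z k xs := by
  have h0 := hcb 0
  have h1 := hcb 1
  have h3 := hcb 3
  simp only [Fin.isValue, Fin.sum_univ_four, Fin.coe_ofNat_eq_mod, Nat.zero_mod, zero_add,
    one_ne_zero, or_self, not_false_eq_true, hk, zero_mul, Nat.reduceMod, Nat.reduceAdd,
    OfNat.ofNat_ne_zero, OfNat.one_ne_ofNat, add_zero, Nat.mod_succ, Nat.one_mod,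
    OfNat.ofNat_ne_one, OfNat.ofNat_eq_ofNat, Nat.reduceEqDiff, Nat.succ_ne_self] at h0 h1 h3
  have e01 : k 0 1 * mono (z 0) xs = k 1 0 * mono (z 1) xs := by linear_combination -h0
  have e12 : k 1 2 * mono (z 1) xs = k 2 1 * mono (z 2) xs := by linear_combination -h1 - h0
  have e23 : k 2 3 * mono (z 2) xs = k 3 2 * mono (z 3) xs := by linear_combination h3
  intro i j
  fin_cases i <;> fin_cases j <;> simp [hk, e01, e12, e23]

def zExField (k : Fin 4 → Fin 4 → ℝ) (y : Fin 3 → ℝ) : Fin 3 → ℝ :=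
  ![-k 0 1 * y 0 + (k 1 0 + k 1 2) * y 1 - k 2 1 * (y 0 * y 1),
    k 0 1 * y 0 - k 1 0 * y 1 - k 2 3 * (y 0 * y 1) + k 3 2 * (y 0 * y 2),
    k 2 3 * (y 0 * y 1) - k 3 2 * (y 0 * y 2)]

lemma maf_zEx {k : Fin 4 → Fin 4 → ℝ}
    (hk : ∀ i j : Fin 4, ¬(i.val + 1 = j.val ∨ j.val + 1 = i.val) → k i j = 0) :
    maf zEx k = zExField k := by
  ext y l
  fin_cases l <;>
    simp [maf, mono, zEx, zExField, Fin.sum_univ_four, Fin.prod_univ_three, hk] <;> ring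

lemma eq_of_ratio_zEx_eq {xs y : Fin 3 → ℝ} (hxs : ∀ l, 0 < xs l) (hy : ∀ l, 0 < y l)
    (h01 : ratio xs y (zEx 0) = ratio xs y (zEx 1))
    (h12 : ratio xs y (zEx 1) = ratio xs y (zEx 2))
    (h23 : ratio xs y (zEx 2) = ratio xs y (zEx 3)) : y = xs := by
  simp only [ratio, zEx, Fin.isValue, Matrix.cons_val', Matrix.cons_val_fin_one,
    Matrix.cons_val_zero, Fin.prod_univ_three, pow_one, Matrix.cons_val_one, pow_zero, mul_one,
    Matrix.cons_val, one_mul, mul_eq_mul_left_iff, div_eq_zero_iff] at h01 h12 h23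
  have hu0 : y 0 / xs 0 = 1 := (mul_eq_right₀ (div_pos (hy 1) (hxs 1)).ne').1 h12.symm
  have hu1 : y 1 / xs 1 = 1 := h01 ▸ hu0
  have hu2 : y 2 / xs 2 = 1 := by
    rw [← h23.resolve_right (by simp [(hy 0).ne', (hxs 0).ne']), hu1]
  have hu : ∀ l, y l / xs l = 1 := by
    intro l
    fin_cases l
    exacts [hu0, hu1, hu2]
  exact funext fun l => (div_eq_one_iff_eq (hxs l).ne').1 (hu l)

lemma dissipation_zEx_pos {k : Fin 4 → Fin 4 → ℝ} {xs y : Fin 3 → ℝ}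
    (hkpos : ∀ i j : Fin 4, (i.val + 1 = j.val ∨ j.val + 1 = i.val) → 0 < k i j)
    (hk : ∀ i j, 0 ≤ k i j) (hxs : ∀ l, 0 < xs l) (hy : ∀ l, 0 < y l) (hne : y ≠ xs) :
    0 < dissipation zEx k xs y := by
  by_contra! hD
  have heq : ∀ i j, 0 < k i j → ratio xs y (zEx i) = ratio xs y (zEx j) := fun i j hij =>
    by_contra fun hr => (dissipation_pos hk hxs hy hij hr).not_ge hD
  exact hne (eq_of_ratio_zEx_eq hxs hy (heq 0 1 (hkpos 0 1 (by decide)))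
    (heq 1 2 (hkpos 1 2 (by decide))) (heq 2 3 (hkpos 2 3 (by decide))))

namespace zExField

variable {k : Fin 4 → Fin 4 → ℝ} {x : ℝ → Fin 3 → ℝ}

lemma exists_pos_le_coord_zero_add_one
    (hk : ∀ i j : Fin 4, (i.val + 1 = j.val ∨ j.val + 1 = i.val) → 0 < k i j)
    (hx : ∀ t ≥ (0 : ℝ), ∀ l, 0 < x t l)
    (hode : ∀ t ≥ (0 : ℝ), HasDerivAt x (zExField k (x t)) t) :
    ∃ δ > 0, ∀ t ≥ (0 : ℝ), δ ≤ x t 0 + x t 1 := by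
  have hk12 := hk 1 2 (by decide)
  have hk21 := hk 2 1 (by decide)
  have hk23 := hk 2 3 (by decide)
  have hk32 := hk 3 2 (by decide)
  refine exists_pos_le_of_hasDerivAt_nonneg_below (L := k 1 2 / (k 2 1 + k 2 3))
    (by positivity) (add_pos (hx 0 le_rfl 0) (hx 0 le_rfl 1))
    (fun t ht => (hasDerivAt_pi.1 (hode t ht) 0).add (hasDerivAt_pi.1 (hode t ht) 1))
    fun t ht hlt => ?_
  have hp := hx t ht
  have hx0 : (k 2 1 + k 2 3) * x t 0 < k 1 2 := by
    rw [← lt_div_iff₀' (by positivity)]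
    linarith [hp 1]
  have hW : zExField k (x t) 0 + zExField k (x t) 1 =
      x t 1 * (k 1 2 - (k 2 1 + k 2 3) * x t 0) + k 3 2 * (x t 0 * x t 2) := by
    simp only [zExField, Matrix.cons_val]
    ring
  rw [hW]
  exact add_nonneg (mul_nonneg (hp 1).le (by linarith))
    (mul_nonneg hk32.le (mul_nonneg (hp 0).le (hp 2).le))

lemma exists_pos_le_coord_one
    (hk : ∀ i j : Fin 4, (i.val + 1 = j.val ∨ j.val + 1 = i.val) → 0 < k i j)
    (hx : ∀ t ≥ (0 : ℝ), ∀ l, 0 < x t l)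
    (hode : ∀ t ≥ (0 : ℝ), HasDerivAt x (zExField k (x t)) t) {δ : ℝ} (hδ : 0 < δ)
    (hδx : ∀ t ≥ (0 : ℝ), δ ≤ x t 0 + x t 1) :
    ∃ δ > 0, ∀ t ≥ (0 : ℝ), δ ≤ x t 1 := by
  have hk01 := hk 0 1 (by decide)
  have hk10 := hk 1 0 (by decide)
  have hk23 := hk 2 3 (by decide)
  have hk32 := hk 3 2 (by decide)
  refine exists_pos_le_of_hasDerivAt_nonneg_below
    (L := min (δ / 2) (min (k 0 1 / (2 * k 2 3)) (k 0 1 * δ / (4 * k 1 0))))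
    (by positivity) (hx 0 le_rfl 1) (fun t ht => hasDerivAt_pi.1 (hode t ht) 1)
    fun t ht hlt => ?_
  have hp := hx t ht
  simp only [lt_min_iff] at hlt
  obtain ⟨hδ2, h23, h10⟩ := hlt
  rw [lt_div_iff₀' (by positivity)] at h23 h10
  -- below the threshold `x t 0 ≥ δ / 2` and `k 0 1 - k 2 3 * x t 1 ≥ k 0 1 / 2`
  have hprod : δ / 2 * (k 0 1 / 2) ≤ x t 0 * (k 0 1 - k 2 3 * x t 1) :=
    mul_le_mul (by linarith [hδx t ht]) (by linarith) (by positivity) (hp 0).le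
  have hx2 : 0 ≤ k 3 2 * (x t 0 * x t 2) := mul_nonneg hk32.le (mul_nonneg (hp 0).le (hp 2).le)
  simp only [zExField, Matrix.cons_val]
  nlinarith

lemma exists_pos_le_coord_two
    (hk : ∀ i j : Fin 4, (i.val + 1 = j.val ∨ j.val + 1 = i.val) → 0 < k i j)
    (hx : ∀ t ≥ (0 : ℝ), ∀ l, 0 < x t l)
    (hode : ∀ t ≥ (0 : ℝ), HasDerivAt x (zExField k (x t)) t) {δ : ℝ} (hδ : 0 < δ)
    (hδx : ∀ t ≥ (0 : ℝ), δ ≤ x t 1) :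
    ∃ δ > 0, ∀ t ≥ (0 : ℝ), δ ≤ x t 2 := by
  have hk23 := hk 2 3 (by decide)
  have hk32 := hk 3 2 (by decide)
  refine exists_pos_le_of_hasDerivAt_nonneg_below (L := k 2 3 * δ / k 3 2)
    (by positivity) (hx 0 le_rfl 2) (fun t ht => hasDerivAt_pi.1 (hode t ht) 2)
    fun t ht hlt => ?_
  rw [lt_div_iff₀' hk32] at hlt
  have hx2 : zExField k (x t) 2 = x t 0 * (k 2 3 * x t 1 - k 3 2 * x t 2) := by
    simp only [zExField, Matrix.cons_val]
    ring
  rw [hx2]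
  exact mul_nonneg (hx t ht 0).le (by nlinarith [hδx t ht])

lemma exists_pos_le_coord_zero
    (hk : ∀ i j : Fin 4, (i.val + 1 = j.val ∨ j.val + 1 = i.val) → 0 < k i j)
    (hx : ∀ t ≥ (0 : ℝ), ∀ l, 0 < x t l)
    (hode : ∀ t ≥ (0 : ℝ), HasDerivAt x (zExField k (x t)) t) {δ : ℝ} (hδ : 0 < δ)
    (hδx : ∀ t ≥ (0 : ℝ), δ ≤ x t 1) :
    ∃ δ > 0, ∀ t ≥ (0 : ℝ), δ ≤ x t 0 := by
  have hk01 := hk 0 1 (by decide)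
  have hk10 := hk 1 0 (by decide)
  have hk12 := hk 1 2 (by decide)
  have hk21 := hk 2 1 (by decide)
  refine exists_pos_le_of_hasDerivAt_nonneg_below
    (L := min (k 1 0 / k 2 1) (k 1 2 * δ / k 0 1))
    (by positivity) (hx 0 le_rfl 0) (fun t ht => hasDerivAt_pi.1 (hode t ht) 0)
    fun t ht hlt => ?_
  simp only [lt_min_iff] at hlt
  obtain ⟨h21, h01⟩ := hlt
  rw [lt_div_iff₀' hk21] at h21
  rw [lt_div_iff₀' hk01] at h01
  have hx0 : zExField k (x t) 0 =
      x t 1 * (k 1 0 - k 2 1 * x t 0) + (k 1 2 * x t 1 - k 0 1 * x t 0) := by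
    simp only [zExField, Matrix.cons_val]
    ring
  rw [hx0]
  exact add_nonneg (mul_nonneg (hx t ht 1).le (by linarith)) (by nlinarith [hδx t ht])

lemma exists_pos_le_coord
    (hk : ∀ i j : Fin 4, (i.val + 1 = j.val ∨ j.val + 1 = i.val) → 0 < k i j)
    (hx : ∀ t ≥ (0 : ℝ), ∀ l, 0 < x t l)
    (hode : ∀ t ≥ (0 : ℝ), HasDerivAt x (zExField k (x t)) t) :
    ∃ δ > 0, ∀ t ≥ (0 : ℝ), ∀ l, δ ≤ x t l := by
  obtain ⟨δ, hδ, hδx⟩ := exists_pos_le_coord_zero_add_one hk hx hode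
  obtain ⟨δ₁, hδ₁, hδ₁x⟩ := exists_pos_le_coord_one hk hx hode hδ hδx
  obtain ⟨δ₀, hδ₀, hδ₀x⟩ := exists_pos_le_coord_zero hk hx hode hδ₁ hδ₁x
  obtain ⟨δ₂, hδ₂, hδ₂x⟩ := exists_pos_le_coord_two hk hx hode hδ₁ hδ₁x
  refine ⟨min δ₀ (min δ₁ δ₂), by positivity, fun t ht l => ?_⟩
  fin_cases l
  · exact (min_le_left _ _).trans (hδ₀x t ht)
  · exact ((min_le_right _ _).trans (min_le_left _ _)).trans (hδ₁x t ht)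
  · exact ((min_le_right _ _).trans (min_le_right _ _)).trans (hδ₂x t ht)

end zExField

/-- for the system `A_1 ⇌ A_2 ⇌ A_1 + A_2 ⇌ A_1 + A_3` (reactions
`C_i ⇌ C_{i+1}`, `i = 1, 2, 3`, with arbitrary positive rate constants), every positive
solution converges to the complex balanced equilibrium `x*`. -/
theorem stmt14 (k : Fin 4 → Fin 4 → ℝ)
    (hkpos : ∀ i j : Fin 4, (i.val + 1 = j.val ∨ j.val + 1 = i.val) → 0 < k i j)
    (hkzero : ∀ i j : Fin 4, ¬(i.val + 1 = j.val ∨ j.val + 1 = i.val) → k i j = 0)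
    (xstar : Fin 3 → ℝ) (hxs : ∀ l, 0 < xstar l)
    (hcb : complexBalanced zEx k xstar) :
    ∀ x : ℝ → Fin 3 → ℝ, (∀ l, 0 < x 0 l) →
      (∀ t : ℝ, 0 ≤ t → ∀ l, 0 < x t l) →
      (∀ t : ℝ, 0 ≤ t → HasDerivAt x (maf zEx k (x t)) t) →
      Tendsto x atTop (𝓝 xstar) := by
  intro x _ hx hode
  have hk : ∀ i j, 0 ≤ k i j := fun i j => by
    by_cases hij : i.val + 1 = j.val ∨ j.val + 1 = i.val
    exacts [(hkpos i j hij).le, (hkzero i j hij).ge]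
  have hdb := isDetailedBalanced_of_complexBalanced_path hkzero hcb
  have hVx : ∀ t ≥ (0 : ℝ), HasDerivAt (fun s => freeEnergy xstar (x s))
      (-(dissipation zEx k xstar (x t) / 2)) t :=
    fun t ht => (hasDerivAt_freeEnergy hxs (hx t ht) (hode t ht)).congr_deriv
      (by linarith [two_mul_sum_maf_mul_log hdb hxs (hx t ht)])
  have hanti : AntitoneOn (fun s => freeEnergy xstar (x s)) (Ici 0) :=
    antitoneOn_Ici_of_hasDerivAt_nonpos hVx fun t ht =>
      neg_nonpos.2 (div_nonneg (dissipation_nonneg hk hxs (hx t ht)) zero_le_two)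
  obtain ⟨δ, hδ, hδx⟩ :=
    zExField.exists_pos_le_coord hkpos hx fun t ht => maf_zEx hkzero ▸ hode t ht
  set K := univ.pi fun l => Icc δ (freeEnergy xstar (x 0) + (exp 1 - 1) * xstar l)
  have hKpos : ∀ y ∈ K, ∀ l, 0 < y l := fun y hy l => hδ.trans_le (hy l (mem_univ l)).1
  refine tendsto_of_hasDerivAt_lyapunov (K := K) (D := fun y => dissipation zEx k xstar y / 2)
    (isCompact_univ_pi fun _ => isCompact_Icc) (continuous_freeEnergy xstar)
    (fun y hy hne => ?_) (((continuousOn_dissipation hxs).mono hKpos).div_const 2)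
    (fun y hy => div_nonneg (dissipation_nonneg hk hxs (hKpos y hy)) zero_le_two)
    (fun y hy hne => half_pos (dissipation_zEx_pos hkpos hk hxs (hKpos y hy) hne))
    (fun t ht l _ => ⟨hδx t ht l, ?_⟩) hVx
  · rw [freeEnergy_self hxs]
    exact freeEnergy_pos hxs (hKpos y hy) hne
  · exact (le_freeEnergy_add hxs (hx t ht) l).trans
      (add_le_add_left (hanti (mem_Ici.2 le_rfl) (mem_Ici.2 ht) ht) _)
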